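/- Let v, v₁, v₂ ∈ ℝ^d and let ω₁, ω₂ ∈ ℝ^d satisfy |ω₁|² + |ω₂|² = 1 (so that ω₁·ω₂ ∈ [−1/2, 1/2] and 1 + ω₁·ω₂ > 0). Define c = ((v₁−v)·ω₁ + (v₂−v)·ω₂)/(1 + ω₁·ω₂) and v* = v + c(ω₁+ω₂), v₁* = v₁ − c ω₁, v₂* = v₂ − c ω₂. Then momentum and energy are conserved: v* + v₁* + v₂* = v + v₁ + v₂ and |v*|² + |v₁*|² + |v₂*|² = |v|² + |v₁|² + |v₂|². -/
import Mathlib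


open scoped RealInnerProductSpace

/-- Scalar coefficient `c = ((v₁−v)·ω₁ + (v₂−v)·ω₂)/(1 + ω₁·ω₂)` of the ternary collision law. -/
noncomputable def tCoef {d : ℕ} (v v₁ v₂ ω₁ ω₂ : EuclideanSpace ℝ (Fin d)) : ℝ :=
  (⟪v₁ - v, ω₁⟫ + ⟪v₂ - v, ω₂⟫) / (1 + ⟪ω₁, ω₂⟫)

/-- `v* = v + c(ω₁+ω₂)`. -/
noncomputable def vStar {d : ℕ} (v v₁ v₂ ω₁ ω₂ : EuclideanSpace ℝ (Fin d)) :
    EuclideanSpace ℝ (Fin d) := v + tCoef v v₁ v₂ ω₁ ω₂ • (ω₁ + ω₂)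

/-- `v₁* = v₁ − c ω₁`. -/
noncomputable def v1Star {d : ℕ} (v v₁ v₂ ω₁ ω₂ : EuclideanSpace ℝ (Fin d)) :
    EuclideanSpace ℝ (Fin d) := v₁ - tCoef v v₁ v₂ ω₁ ω₂ • ω₁

/-- `v₂* = v₂ − c ω₂`. -/
noncomputable def v2Star {d : ℕ} (v v₁ v₂ ω₁ ω₂ : EuclideanSpace ℝ (Fin d)) :
    EuclideanSpace ℝ (Fin d) := v₂ - tCoef v v₁ v₂ ω₁ ω₂ • ω₂

/-- the ternary collision law conserves momentum and energy. -/
theorem ternary_momentum_energy_conservation {d : ℕ}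
    (v v₁ v₂ ω₁ ω₂ : EuclideanSpace ℝ (Fin d)) (hω : ‖ω₁‖ ^ 2 + ‖ω₂‖ ^ 2 = 1) :
    vStar v v₁ v₂ ω₁ ω₂ + v1Star v v₁ v₂ ω₁ ω₂ + v2Star v v₁ v₂ ω₁ ω₂ = v + v₁ + v₂ ∧
    ‖vStar v v₁ v₂ ω₁ ω₂‖ ^ 2 + ‖v1Star v v₁ v₂ ω₁ ω₂‖ ^ 2 + ‖v2Star v v₁ v₂ ω₁ ω₂‖ ^ 2 =
      ‖v‖ ^ 2 + ‖v₁‖ ^ 2 + ‖v₂‖ ^ 2 := by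
  have h2 : |⟪ω₁, ω₂⟫| ≤ ‖ω₁‖ * ‖ω₂‖ := abs_real_inner_le_norm ω₁ ω₂
  have h2' := abs_le.mp h2
  have hne : 1 + ⟪ω₁, ω₂⟫ ≠ 0 := by nlinarith [sq_nonneg (‖ω₁‖ - ‖ω₂‖), h2'.1]
  set c := tCoef v v₁ v₂ ω₁ ω₂ with hc
  have hkey : c * (1 + ⟪ω₁, ω₂⟫) = ⟪v₁ - v, ω₁⟫ + ⟪v₂ - v, ω₂⟫ := div_mul_cancel₀ _ hne
  simp only [inner_sub_left] at hkey
  constructor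
  · simp only [vStar, v1Star, v2Star, ← hc]
    module
  · simp only [vStar, v1Star, v2Star, ← hc]
    rw [norm_add_sq_real, norm_sub_sq_real, norm_sub_sq_real]
    simp only [inner_smul_right, inner_add_right, norm_smul, mul_pow, norm_add_sq_real,
      Real.norm_eq_abs, sq_abs, real_inner_self_eq_norm_sq]
    linear_combination (2*c) * hkey + (2*c^2) * hω
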